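/- Define ν(h) := ⌊−log₂ h⌋ and ω(h) := (1 + 1/√2)·h·2^{ν(h)/2} + (1/3)(√8 + 2)·2^{−ν(h)/2}. Then liminf_{h↓0} ω(h)/√h = 2√(4/3 + √2) and limsup_{h↓0} ω(h)/√h = (11 + 7√2)/6. In particular ω(h) = O(√h) as h ↓ 0. -/

import Mathlib

noncomputable def ν (h : ℝ) : ℤ := ⌊-Real.logb 2 h⌋

noncomputable def ω (h : ℝ) : ℝ :=
  (1 + 1 / Real.sqrt 2) * h * (2 : ℝ) ^ ((ν h : ℝ) / 2)
    + (1 / 3) * (2 * Real.sqrt 2 + 2) * (2 : ℝ) ^ (-(ν h : ℝ) / 2)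

/-!
With `t = h * 2 ^ ν h ∈ (1/2, 1]` one has `ω h / √h = a √t + b / √t`, where `a = 1 + 1/√2` and
`b = (2√2 + 2)/3`. As `h ↓ 0` the mantissa `t` sweeps all of `(1/2, 1]` again on every dyadic
scale: the image of the filter `𝓝[>] 0` is the principal filter of `(1/2, 1]`. Hence the liminf
and limsup are the infimum and supremum of `a √t + b / √t` over `(1/2, 1]`. By AM-GM the infimum is
`2 √(ab) = 2 √(4/3 + √2)`, attained at `t = b/a = 2√2/3`; the function is convex in `√t`, so the
supremum is the larger endpoint value, the one at `t = 1/2`, namely `(11 + 7√2)/6`.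
-/

open Real Filter Set Topology

lemma two_sqrt_mul_le_mul_sqrt_add_div_sqrt {a b t : ℝ} (ha : 0 ≤ a) (hb : 0 ≤ b) (ht : 0 < t) :
    2 * √(a * b) ≤ a * √t + b / √t := by
  have hu : 0 < √t := sqrt_pos.2 ht
  rw [sqrt_mul ha, ← sub_nonneg]
  have hsq : a * √t + b / √t - 2 * (√a * √b) = (√a * √t - √b) ^ 2 / √t := by
    field_simp
    linear_combination (-√t ^ 2) * sq_sqrt ha - sq_sqrt hb
  rw [hsq]
  positivity

lemma mul_sqrt_div_add_div_sqrt_div {a b : ℝ} (ha : 0 < a) (hb : 0 < b) :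
    a * √(b / a) + b / √(b / a) = 2 * √(a * b) := by
  have hsa : 0 < √a := sqrt_pos.2 ha
  have hsb : 0 < √b := sqrt_pos.2 hb
  rw [sqrt_div' _ ha.le, sqrt_mul ha.le]
  field_simp
  rw [sq_sqrt ha.le, sq_sqrt hb.le]
  ring

lemma mul_sqrt_add_div_sqrt_le_max {a b t₁ t₂ t : ℝ} (ha : 0 ≤ a) (hb : 0 ≤ b) (ht₁ : 0 < t₁)
    (ht : t ∈ Icc t₁ t₂) :
    a * √t + b / √t ≤ max (a * √t₁ + b / √t₁) (a * √t₂ + b / √t₂) := by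
  have hconv : ConvexOn ℝ (Ioi 0) fun u : ℝ => a * u + b / u := by
    refine (((convexOn_id (convex_Ioi 0)).smul ha).add
      ((convexOn_zpow (𝕜 := ℝ) (-1)).smul hb)).congr fun u _ => ?_
    simp [div_eq_mul_inv]
  have hs₁ : 0 < √t₁ := sqrt_pos.2 ht₁
  exact hconv.le_max_of_mem_Icc hs₁ (hs₁.trans_le (sqrt_le_sqrt (ht.1.trans ht.2)))
    ⟨sqrt_le_sqrt ht.1, sqrt_le_sqrt ht.2⟩

noncomputable def dyadicMantissa (h : ℝ) : ℝ := h * 2 ^ ν h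

noncomputable def profile (t : ℝ) : ℝ :=
  (1 + 1 / √2) * √t + (1 / 3) * (2 * √2 + 2) / √t

lemma ν_eq_intLog {h : ℝ} (hh : 0 < h) : ν h = Int.log 2 h⁻¹ := by
  rw [ν, ← Real.logb_inv, ← Real.floor_logb_natCast (inv_nonneg.2 hh.le)]
  norm_num

lemma dyadicMantissa_mem_Ioc {h : ℝ} (hh : 0 < h) : dyadicMantissa h ∈ Ioc (1 / 2 : ℝ) 1 := by
  have hle := Int.zpow_log_le_self (b := 2) one_lt_two (inv_pos.2 hh)
  have hlt := Int.lt_zpow_succ_log_self (b := 2) one_lt_two h⁻¹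
  rw [zpow_add_one₀ (by norm_num)] at hlt
  push_cast at hle hlt
  have hinv := mul_inv_cancel₀ hh.ne'
  rw [dyadicMantissa, ν_eq_intLog hh]
  constructor <;> nlinarith

lemma ν_mul_zpow_neg {c : ℝ} (hc : c ∈ Ioc (1 / 2 : ℝ) 1) (k : ℤ) : ν (c * 2 ^ (-k)) = k := by
  have hc₀ : 0 < c := by linarith [hc.1]
  have hk : (0 : ℝ) < 2 ^ k := by positivity
  have hinv : (c * 2 ^ (-k))⁻¹ = c⁻¹ * 2 ^ k := by rw [mul_inv, zpow_neg, inv_inv]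
  have hc₁ : 1 ≤ c⁻¹ := one_le_inv_iff₀.2 ⟨hc₀, hc.2⟩
  have hc₂ : c⁻¹ < 2 := by rw [inv_lt_comm₀ hc₀ two_pos]; linarith [hc.1]
  have hpos : 0 < c⁻¹ * (2 : ℝ) ^ k := by positivity
  rw [ν_eq_intLog (by positivity), hinv]
  refine le_antisymm (Int.lt_add_one_iff.1 ?_) ?_
  · rw [← Int.lt_zpow_iff_log_lt one_lt_two hpos, zpow_add_one₀ (by norm_num)]
    push_cast
    nlinarith
  · rw [← Int.zpow_le_iff_le_log one_lt_two hpos]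
    push_cast
    nlinarith

lemma dyadicMantissa_mul_zpow_neg {c : ℝ} (hc : c ∈ Ioc (1 / 2 : ℝ) 1) (k : ℤ) :
    dyadicMantissa (c * 2 ^ (-k)) = c := by
  rw [dyadicMantissa, ν_mul_zpow_neg hc, mul_assoc, ← zpow_add₀ two_ne_zero, neg_add_cancel,
    zpow_zero, mul_one]

/-- Every `c ∈ (1/2, 1]` is the mantissa of `c * 2 ^ (-k)` for all `k`, hence arbitrarily
close to `0`. -/
lemma map_dyadicMantissa_nhdsGT_zero : map dyadicMantissa (𝓝[>] 0) = 𝓟 (Ioc (1 / 2) 1) := by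
  refine le_antisymm ?_ fun U hU c hc => ?_
  · rw [le_principal_iff, mem_map]
    filter_upwards [self_mem_nhdsWithin] with h hh using dyadicMantissa_mem_Ioc hh
  obtain ⟨ε, hε, hsub⟩ := mem_nhdsGT_iff_exists_Ioo_subset.1 (mem_map.1 hU)
  obtain ⟨k, hk⟩ := exists_pow_lt_of_lt_one hε (by norm_num : (1 / 2 : ℝ) < 1)
  have hmem : c * 2 ^ (-(k : ℤ)) ∈ Ioo 0 ε := by
    have h2k : (2 : ℝ) ^ (-(k : ℤ)) = (1 / 2) ^ k := by simp [zpow_neg, zpow_natCast]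
    rw [h2k]
    constructor
    · exact mul_pos (by linarith [hc.1]) (by positivity)
    · nlinarith [hc.2, (by positivity : (0 : ℝ) < (1 / 2) ^ k)]
  simpa only [mem_preimage, dyadicMantissa_mul_zpow_neg hc] using hsub hmem

lemma limsup_comp_dyadicMantissa {φ : ℝ → ℝ} (hφ : BddAbove (φ '' Ioc (1 / 2) 1)) :
    limsup (φ ∘ dyadicMantissa) (𝓝[>] 0) = sSup (φ '' Ioc (1 / 2) 1) := by
  rw [limsup, ← map_map, map_dyadicMantissa_nhdsGT_zero, map_principal,
    limsSup_principal_eq_csSup hφ ((nonempty_Ioc.2 (by norm_num)).image φ)]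

lemma liminf_comp_dyadicMantissa {φ : ℝ → ℝ} (hφ : BddBelow (φ '' Ioc (1 / 2) 1)) :
    liminf (φ ∘ dyadicMantissa) (𝓝[>] 0) = sInf (φ '' Ioc (1 / 2) 1) := by
  rw [liminf, ← map_map, map_dyadicMantissa_nhdsGT_zero, map_principal,
    limsInf_principal_eq_csSup hφ ((nonempty_Ioc.2 (by norm_num)).image φ)]

lemma ω_div_sqrt {h : ℝ} (hh : 0 < h) : ω h / √h = profile (dyadicMantissa h) := by
  have hsqrt : √(dyadicMantissa h) = √h * 2 ^ ((ν h : ℝ) / 2) := by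
    rw [dyadicMantissa, sqrt_mul hh.le, sqrt_eq_rpow, sqrt_eq_rpow, ← rpow_intCast,
      ← rpow_mul zero_le_two, mul_one_div]
  have hneg : (2 : ℝ) ^ (-(ν h : ℝ) / 2) = ((2 : ℝ) ^ ((ν h : ℝ) / 2))⁻¹ := by
    rw [neg_div, rpow_neg zero_le_two]
  have hh' : h = √h ^ 2 := (sq_sqrt hh.le).symm
  have hs : 0 < √h := sqrt_pos.2 hh
  rw [ω, profile, hsqrt, hneg]
  nth_rewrite 1 [hh']
  field_simp

lemma sqrt_two_sq : √2 ^ 2 = 2 := sq_sqrt zero_le_two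

lemma profile_half : profile (1 / 2) = (11 + 7 * √2) / 6 := by
  rw [profile, one_div 2, sqrt_inv]
  field_simp
  linear_combination (12 * √2 ^ 2 - 9 * √2 - 9) * sqrt_two_sq

lemma profile_one : profile 1 = (10 + 7 * √2) / 6 := by
  rw [profile, sqrt_one]
  field_simp
  linear_combination -9 * sqrt_two_sq

lemma profile_coeff_mul : (1 + 1 / √2) * ((1 / 3) * (2 * √2 + 2)) = 4 / 3 + √2 := by
  field_simp
  linear_combination -sqrt_two_sq

lemma profile_coeff_div : (1 / 3) * (2 * √2 + 2) / (1 + 1 / √2) = 2 * √2 / 3 := by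
  field_simp

lemma isLeast_profile_image :
    IsLeast (profile '' Ioc (1 / 2) 1) (2 * √(4 / 3 + √2)) := by
  have ha : (0 : ℝ) < 1 + 1 / √2 := by positivity
  have hb : (0 : ℝ) < (1 / 3) * (2 * √2 + 2) := by positivity
  have hmin : (1 / 3) * (2 * √2 + 2) / (1 + 1 / √2) ∈ Ioc (1 / 2 : ℝ) 1 := by
    rw [profile_coeff_div]
    constructor <;> nlinarith [sqrt_two_sq, sqrt_nonneg 2]
  refine ⟨⟨_, hmin, ?_⟩, ?_⟩
  · rw [profile, mul_sqrt_div_add_div_sqrt_div ha hb, profile_coeff_mul]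
  · rintro _ ⟨t, ht, rfl⟩
    rw [← profile_coeff_mul]
    exact two_sqrt_mul_le_mul_sqrt_add_div_sqrt ha.le hb.le (by linarith [ht.1])

/-- The supremum is approached as the mantissa decreases to `1/2`, but is not attained. -/
lemma isLUB_profile_image : IsLUB (profile '' Ioc (1 / 2) 1) ((11 + 7 * √2) / 6) := by
  rw [← profile_half]
  refine isLUB_of_mem_closure ?_ ?_
  · rintro _ ⟨t, ht, rfl⟩
    refine (mul_sqrt_add_div_sqrt_le_max (a := 1 + 1 / √2) (b := 1 / 3 * (2 * √2 + 2))
      (by positivity) (by positivity) (by norm_num) (Ioc_subset_Icc_self ht)).trans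
      (max_le le_rfl ?_)
    change profile 1 ≤ profile (1 / 2)
    rw [profile_half, profile_one]
    linarith
  · have hcont : ContinuousAt profile (1 / 2) := by
      unfold profile
      fun_prop (disch := positivity)
    exact hcont.continuousWithinAt.mem_closure_image
      (by rw [closure_Ioc (by norm_num)]; norm_num)

theorem stmt_10 :
    Filter.liminf (fun h : ℝ => ω h / Real.sqrt h) (nhdsWithin 0 (Set.Ioi 0))
      = 2 * Real.sqrt (4 / 3 + Real.sqrt 2) ∧
    Filter.limsup (fun h : ℝ => ω h / Real.sqrt h) (nhdsWithin 0 (Set.Ioi 0))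
      = (11 + 7 * Real.sqrt 2) / 6 ∧
    (∃ C > 0, ∀ h ∈ Set.Ioc (0 : ℝ) 1, ω h ≤ C * Real.sqrt h) := by
  have hω : (fun h : ℝ => ω h / √h) =ᶠ[𝓝[>] 0] profile ∘ dyadicMantissa :=
    eventually_mem_nhdsWithin.mono fun h hh => ω_div_sqrt hh
  refine ⟨?_, ?_, ⟨(11 + 7 * √2) / 6, by positivity, fun h hh => ?_⟩⟩
  · rw [liminf_congr hω, liminf_comp_dyadicMantissa isLeast_profile_image.bddBelow,
      isLeast_profile_image.csInf_eq]
  · rw [limsup_congr hω, limsup_comp_dyadicMantissa isLUB_profile_image.bddAbove,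
      isLUB_profile_image.csSup_eq ((nonempty_Ioc.2 (by norm_num)).image profile)]
  · have hle := isLUB_profile_image.1 (mem_image_of_mem profile (dyadicMantissa_mem_Ioc hh.1))
    rwa [← ω_div_sqrt hh.1, div_le_iff₀ (sqrt_pos.2 hh.1)] at hle
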